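/- There exists a constant c₁ > 1, depending only on d and α, such that for all r ≥ 1, c₁^{-1} e^{-r} r^{(d+α-1)/2} ≤ ψ(r) ≤ c₁ e^{-r} r^{(d+α-1)/2}. -/

import Mathlib

open MeasureTheory Real Set

/-- `ψ(r) = 2^{-(d+α)} Γ((d+α)/2)^{-1} ∫_0^∞ s^{(d+α)/2-1} e^{-s/4 - r²/s} ds`. -/
noncomputable def psiFn (d : ℕ) (α r : ℝ) : ℝ :=
  (2 : ℝ) ^ (-((d : ℝ) + α)) / Real.Gamma (((d : ℝ) + α) / 2) *
    ∫ s in Set.Ioi (0 : ℝ), s ^ (((d : ℝ) + α) / 2 - 1) * Real.exp (-s / 4 - r ^ 2 / s)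

/-!
Write `ν = (d + α)/2 ≥ 1`. Completing the square, `-s/4 - r²/s = -r - (s - 2r)²/(4s)`, so the
integrand is `e^{-r} s^{ν-1}` times a bump of width `≍ √r` centred at `s = 2r`, where
`s^{ν-1} ≍ r^{ν-1}`; this gives `e^{-r} r^{ν-1/2}`. For the lower bound we integrate only over
`(2r, 2r + √r]`. For the upper bound, on `(0, 8r]` the bump is dominated by a Gaussian of variance
`≍ r`, and on `(8r, ∞)` the exponent is at most `-r - s/8`, leaving `e^{-r}` times a Gamma integral.
-/

lemma exists_one_lt_inv_mul_le_and_le_mul {ι : Type*} {S : Set ι} {f g : ι → ℝ} {a b : ℝ}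
    (ha : 0 < a) (hf : ∀ x ∈ S, 0 ≤ f x) (hlow : ∀ x ∈ S, a * f x ≤ g x)
    (hup : ∀ x ∈ S, g x ≤ b * f x) :
    ∃ c, 1 < c ∧ ∀ x ∈ S, c⁻¹ * f x ≤ g x ∧ g x ≤ c * f x := by
  have ha' : 0 < a⁻¹ := inv_pos.2 ha
  refine ⟨max (a⁻¹ + 1) b, lt_max_of_lt_left (by linarith), fun x hx => ⟨?_, ?_⟩⟩
  · refine le_trans ?_ (hlow x hx)
    gcongr
    · exact hf x hx
    · exact inv_le_of_inv_le₀ ha (le_max_of_le_left (by linarith))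
  · refine (hup x hx).trans ?_
    gcongr
    · exact hf x hx
    · exact le_max_right _ _

noncomputable section

def psiIntegrand (ν r s : ℝ) : ℝ := s ^ (ν - 1) * exp (-s / 4 - r ^ 2 / s)

def psiIntegral (ν r : ℝ) : ℝ := ∫ s in Ioi 0, psiIntegrand ν r s

lemma psiFn_eq_mul_psiIntegral (d : ℕ) (α r : ℝ) :
    psiFn d α r = 2 ^ (-((d : ℝ) + α)) / Gamma (((d : ℝ) + α) / 2) *
      psiIntegral (((d : ℝ) + α) / 2) r :=
  rfl

lemma psiIntegrand_nonneg (ν r : ℝ) {s : ℝ} (hs : 0 ≤ s) : 0 ≤ psiIntegrand ν r s := by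
  unfold psiIntegrand
  positivity

lemma psiIntegrand_eq_exp_neg_mul (ν r : ℝ) {s : ℝ} (hs : s ≠ 0) :
    psiIntegrand ν r s = exp (-r) * (s ^ (ν - 1) * exp (-((s - 2 * r) ^ 2 / (4 * s)))) := by
  have hsq : -s / 4 - r ^ 2 / s = -r + -((s - 2 * r) ^ 2 / (4 * s)) := by
    field_simp
    ring
  rw [psiIntegrand, hsq, exp_add]
  ring

lemma integrableOn_rpow_mul_exp_neg_mul_Ioi {ν b : ℝ} (hν : 0 < ν) (hb : 0 < b) :
    IntegrableOn (fun s : ℝ => s ^ (ν - 1) * exp (-(b * s))) (Ioi 0) := by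
  simpa using integrableOn_rpow_mul_exp_neg_mul_rpow (p := 1) (by linarith : -1 < ν - 1)
    one_pos hb

lemma integrableOn_psiIntegrand {ν : ℝ} (hν : 0 < ν) (r : ℝ) :
    IntegrableOn (psiIntegrand ν r) (Ioi 0) := by
  refine (integrableOn_rpow_mul_exp_neg_mul_Ioi hν (by norm_num : (0 : ℝ) < 1 / 4)).mono'
    (by unfold psiIntegrand; fun_prop) ?_
  filter_upwards [ae_restrict_mem measurableSet_Ioi] with s (hs : 0 < s)
  rw [norm_of_nonneg (psiIntegrand_nonneg ν r hs.le), psiIntegrand]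
  have : 0 ≤ r ^ 2 / s := by positivity
  gcongr
  linarith

lemma setIntegral_psiIntegrand_le_psiIntegral {ν : ℝ} (hν : 0 < ν) (r : ℝ) {t : Set ℝ}
    (ht : t ⊆ Ioi 0) : ∫ s in t, psiIntegrand ν r s ≤ psiIntegral ν r :=
  setIntegral_mono_set (integrableOn_psiIntegrand hν r)
    (ae_restrict_of_forall_mem measurableSet_Ioi fun _ hs => psiIntegrand_nonneg ν r (le_of_lt hs))
    (Filter.Eventually.of_forall ht)

lemma le_psiIntegral {ν r : ℝ} (hν : 1 ≤ ν) (hr : 0 < r) :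
    2 ^ (ν - 1) * exp (-(1 / 8)) * (exp (-r) * r ^ (ν - 1 / 2)) ≤ psiIntegral ν r := by
  set J := Ioc (2 * r) (2 * r + √r)
  have hJ : J ⊆ Ioi 0 := fun s hs => lt_trans (by positivity) hs.1
  have hbound : ∀ s ∈ J, exp (-r) * ((2 * r) ^ (ν - 1) * exp (-(1 / 8))) ≤ psiIntegrand ν r s := by
    rintro s ⟨hs₁, hs₂⟩
    have hs : 0 < s := by linarith
    have hsq : (s - 2 * r) ^ 2 ≤ r := by
      calc (s - 2 * r) ^ 2 ≤ √r ^ 2 := pow_le_pow_left₀ (by linarith) (by linarith) 2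
        _ = r := sq_sqrt hr.le
    have : (s - 2 * r) ^ 2 / (4 * s) ≤ 1 / 8 := by
      rw [div_le_iff₀ (by positivity)]
      nlinarith
    rw [psiIntegrand_eq_exp_neg_mul ν r hs.ne']
    gcongr
  calc 2 ^ (ν - 1) * exp (-(1 / 8)) * (exp (-r) * r ^ (ν - 1 / 2))
      = exp (-r) * ((2 * r) ^ (ν - 1) * exp (-(1 / 8))) * volume.real J := by
        rw [volume_real_Ioc_of_le (le_add_of_nonneg_right (sqrt_nonneg r)), add_sub_cancel_left,
          mul_rpow zero_le_two hr.le, sqrt_eq_rpow, show ν - 1 / 2 = (ν - 1) + 1 / 2 by ring,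
          rpow_add hr]
        ring
    _ ≤ ∫ s in J, psiIntegrand ν r s :=
        setIntegral_ge_of_const_le_real measurableSet_Ioc measure_Ioc_lt_top.ne hbound
          ((integrableOn_psiIntegrand (by linarith) r).mono_set hJ)
    _ ≤ psiIntegral ν r := setIntegral_psiIntegrand_le_psiIntegral (by linarith) r hJ

lemma setIntegral_Ioc_psiIntegrand_le {ν r : ℝ} (hν : 1 ≤ ν) (hr : 0 < r) :
    ∫ s in Ioc 0 (8 * r), psiIntegrand ν r s ≤
      8 ^ (ν - 1) * √(32 * π) * (exp (-r) * r ^ (ν - 1 / 2)) := by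
  set g : ℝ → ℝ := fun s => exp (-(32 * r)⁻¹ * (s - 2 * r) ^ 2)
  have hg : Integrable g :=
    (integrable_exp_neg_mul_sq (by positivity)).comp_sub_right (2 * r)
  have hg_integral : ∫ s, g s = √(32 * π) * r ^ (1 / 2 : ℝ) := by
    rw [integral_sub_right_eq_self (fun y => exp (-(32 * r)⁻¹ * y ^ 2)), integral_gaussian,
      div_inv_eq_mul, ← mul_assoc, mul_comm π, sqrt_mul (by positivity), sqrt_eq_rpow r]
  have hbound : ∀ s ∈ Ioc 0 (8 * r), psiIntegrand ν r s ≤ (8 * r) ^ (ν - 1) * exp (-r) * g s := by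
    rintro s ⟨hs₀, hs₈⟩
    have : (s - 2 * r) ^ 2 / (32 * r) ≤ (s - 2 * r) ^ 2 / (4 * s) :=
      div_le_div_of_nonneg_left (sq_nonneg _) (by positivity) (by linarith)
    simp only [g]
    rw [psiIntegrand_eq_exp_neg_mul ν r hs₀.ne', show -(32 * r)⁻¹ * (s - 2 * r) ^ 2 =
      -((s - 2 * r) ^ 2 / (32 * r)) by ring, mul_comm _ (exp (-r)), mul_assoc]
    gcongr
  calc ∫ s in Ioc 0 (8 * r), psiIntegrand ν r s
      ≤ ∫ s in Ioc 0 (8 * r), (8 * r) ^ (ν - 1) * exp (-r) * g s :=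
        setIntegral_mono_on ((integrableOn_psiIntegrand (by linarith) r).mono_set
          Ioc_subset_Ioi_self) (hg.integrableOn.const_mul _) measurableSet_Ioc hbound
    _ ≤ (8 * r) ^ (ν - 1) * exp (-r) * ∫ s, g s := by
        rw [integral_const_mul]
        exact mul_le_mul_of_nonneg_left (setIntegral_le_integral hg
          (Filter.Eventually.of_forall fun _ => (exp_pos _).le)) (by positivity)
    _ = 8 ^ (ν - 1) * √(32 * π) * (exp (-r) * r ^ (ν - 1 / 2)) := by
        rw [hg_integral, mul_rpow (by norm_num) hr.le, show ν - 1 / 2 = (ν - 1) + 1 / 2 by ring,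
          rpow_add hr]
        ring

lemma setIntegral_Ioi_psiIntegrand_le {ν r : ℝ} (hν : 0 < ν) (hr : 0 ≤ r) :
    ∫ s in Ioi (8 * r), psiIntegrand ν r s ≤ exp (-r) * (8 ^ ν * Gamma ν) := by
  have hint := integrableOn_rpow_mul_exp_neg_mul_Ioi hν (by norm_num : (0 : ℝ) < 1 / 8)
  have hsub : Ioi (8 * r) ⊆ Ioi 0 := Ioi_subset_Ioi (by positivity : (0 : ℝ) ≤ 8 * r)
  have hbound : ∀ s ∈ Ioi (8 * r),
      psiIntegrand ν r s ≤ exp (-r) * (s ^ (ν - 1) * exp (-(1 / 8 * s))) := by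
    intro s (hs : 8 * r < s)
    have hs₀ : 0 < s := by linarith
    have : 0 ≤ r ^ 2 / s := by positivity
    rw [psiIntegrand, mul_left_comm, ← exp_add]
    gcongr
    linarith
  calc ∫ s in Ioi (8 * r), psiIntegrand ν r s
      ≤ ∫ s in Ioi (8 * r), exp (-r) * (s ^ (ν - 1) * exp (-(1 / 8 * s))) :=
        setIntegral_mono_on ((integrableOn_psiIntegrand hν r).mono_set hsub)
          ((hint.mono_set hsub).const_mul _) measurableSet_Ioi hbound
    _ ≤ exp (-r) * ∫ s in Ioi 0, s ^ (ν - 1) * exp (-(1 / 8 * s)) := by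
        rw [integral_const_mul]
        exact mul_le_mul_of_nonneg_left (setIntegral_mono_set hint
          (ae_restrict_of_forall_mem measurableSet_Ioi fun s (hs : 0 < s) => by positivity)
          (Filter.Eventually.of_forall hsub)) (exp_pos _).le
    _ = exp (-r) * (8 ^ ν * Gamma ν) := by
        rw [integral_rpow_mul_exp_neg_mul_Ioi hν (by norm_num)]
        norm_num

lemma psiIntegral_le {ν r : ℝ} (hν : 1 ≤ ν) (hr : 1 ≤ r) :
    psiIntegral ν r ≤
      (8 ^ (ν - 1) * √(32 * π) + 8 ^ ν * Gamma ν) * (exp (-r) * r ^ (ν - 1 / 2)) := by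
  have hr₀ : 0 < r := by linarith
  have hint := integrableOn_psiIntegrand (ν := ν) (by linarith) r
  have hΓ : 0 ≤ 8 ^ ν * Gamma ν := by
    have := Gamma_pos_of_pos (by linarith : 0 < ν)
    positivity
  rw [psiIntegral, ← Ioc_union_Ioi_eq_Ioi (by positivity : 0 ≤ 8 * r),
    setIntegral_union (Ioc_disjoint_Ioi le_rfl) measurableSet_Ioi
      (hint.mono_set Ioc_subset_Ioi_self) (hint.mono_set (Ioi_subset_Ioi (by positivity))),
    add_mul]
  refine add_le_add (setIntegral_Ioc_psiIntegrand_le hν hr₀)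
    ((setIntegral_Ioi_psiIntegrand_le (by linarith) hr₀.le).trans ?_)
  calc exp (-r) * (8 ^ ν * Gamma ν) = 8 ^ ν * Gamma ν * (exp (-r) * 1) := by ring
    _ ≤ 8 ^ ν * Gamma ν * (exp (-r) * r ^ (ν - 1 / 2)) := by
        gcongr
        exact one_le_rpow hr (by linarith)

end

theorem psiFn_asymptotics_general (d : ℕ) (hd : 2 ≤ d) (α : ℝ) (hα₀ : 0 < α) :
    ∃ c₁ : ℝ, 1 < c₁ ∧ ∀ r : ℝ, 1 ≤ r →
      c₁⁻¹ * (Real.exp (-r) * r ^ (((d : ℝ) + α - 1) / 2)) ≤ psiFn d α r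
        ∧ psiFn d α r ≤ c₁ * (Real.exp (-r) * r ^ (((d : ℝ) + α - 1) / 2)) := by
  simp only [psiFn_eq_mul_psiIntegral]
  set ν := ((d : ℝ) + α) / 2 with hν_def
  set K := (2 : ℝ) ^ (-((d : ℝ) + α)) / Gamma ν
  have hν : 1 ≤ ν := by
    have : (2 : ℝ) ≤ d := by exact_mod_cast hd
    rw [hν_def]
    linarith
  have hK : 0 < K := div_pos (rpow_pos_of_pos two_pos _) (Gamma_pos_of_pos (by linarith))
  rw [show ((d : ℝ) + α - 1) / 2 = ν - 1 / 2 by ring]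
  refine exists_one_lt_inv_mul_le_and_le_mul (S := Ici 1)
    (a := K * (2 ^ (ν - 1) * exp (-(1 / 8))))
    (b := K * (8 ^ (ν - 1) * √(32 * π) + 8 ^ ν * Gamma ν)) (by positivity)
    (fun r (hr : 1 ≤ r) => mul_nonneg (exp_pos _).le (rpow_nonneg (by linarith) _))
    (fun r (hr : 1 ≤ r) => ?_) (fun r (hr : 1 ≤ r) => ?_)
  · rw [mul_assoc]
    exact mul_le_mul_of_nonneg_left (le_psiIntegral hν (by linarith)) hK.le
  · rw [mul_assoc]
    exact mul_le_mul_of_nonneg_left (psiIntegral_le hν hr) hK.le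

/-- There is `c₁ > 1` depending only on `d` and `α` with
`c₁⁻¹ e^{-r} r^{(d+α-1)/2} ≤ ψ(r) ≤ c₁ e^{-r} r^{(d+α-1)/2}` for all `r ≥ 1`. -/
theorem psiFn_asymptotics (d : ℕ) (hd : 2 ≤ d) (α : ℝ) (hα₀ : 0 < α) (hα₂ : α < 2) :
    ∃ c₁ : ℝ, 1 < c₁ ∧ ∀ r : ℝ, 1 ≤ r →
      c₁⁻¹ * (Real.exp (-r) * r ^ (((d : ℝ) + α - 1) / 2)) ≤ psiFn d α r
        ∧ psiFn d α r ≤ c₁ * (Real.exp (-r) * r ^ (((d : ℝ) + α - 1) / 2)) :=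
  psiFn_asymptotics_general d hd α hα₀
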